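/- arXiv:1308.3630 — 6 statements merged into one kernel-verified Lean document; each statement's English description precedes it below -/
import Mathlib

section
/- Let m ≥ 2 be an integer and let α, β, λ ∈ ℂ. Then (|α + λβ|² + |β|²)^{1/2} ≤ ‖α·I_m + β·J_m(λ)‖ ≤ |α + λβ| + |β|. -/
/-!
Since `J_m(λ) = λ I + N` with `N` the nilpotent shift, `α I + β J_m(λ) = (α + λβ) I + β N`.
The shift maps `x` to `(x₂, …, x_m, 0)`, so `‖N‖ ≤ 1` and the upper bound is the triangle
inequality. For the lower bound, the second column of the matrix has entries `β` and `α + λβ`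
in rows one and two, and the operator norm dominates the Euclidean norm of every column.
-/

noncomputable section

/-- The basic Jordan block `J_m(λ)`. -/
def jordanBlock (m : ℕ) (lam : ℂ) : Matrix (Fin m) (Fin m) ℂ :=
  Matrix.of fun i j => if (i : ℕ) = (j : ℕ) then lam else if (i : ℕ) + 1 = (j : ℕ) then 1 else 0

/-- The operator norm of a complex matrix, i.e. the norm of the induced operator on
Euclidean space. -/
def opNorm {ι : Type*} [Fintype ι] [DecidableEq ι] (A : Matrix ι ι ℂ) : ℝ :=
  ‖Matrix.toEuclideanCLM (𝕜 := ℂ) A‖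

open Matrix
open scoped Matrix.Norms.L2Operator

lemma sqrt_sum_norm_sq_le_l2_opNorm {𝕜 m n : Type*} [RCLike 𝕜] [Fintype m] [Fintype n]
    [DecidableEq n] (A : Matrix m n 𝕜) (s : Finset m) (j : n) :
    √(∑ i ∈ s, ‖A i j‖ ^ 2) ≤ ‖A‖ := by
  have hcol := A.l2_opNorm_mulVec (EuclideanSpace.single j 1)
  simp only [PiLp.ofLp_single, mulVec_single, MulOpposite.op_one, one_smul,
    PiLp.continuousLinearEquiv_symm_apply, EuclideanSpace.norm_eq, col_apply, PiLp.norm_single,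
    norm_one, mul_one] at hcol
  exact (Real.sqrt_le_sqrt (Finset.sum_le_univ_sum_of_nonneg fun _ ↦ by positivity)).trans hcol

lemma jordanBlock_eq_smul_one_add (m : ℕ) (lam : ℂ) :
    jordanBlock m lam = lam • 1 + jordanBlock m 0 := by
  ext i j
  by_cases h : i = j
  · simp [jordanBlock, h]
  · simp [jordanBlock, h, Fin.val_ne_of_ne h]

lemma smul_one_add_smul_jordanBlock (m : ℕ) (α β lam : ℂ) :
    α • (1 : Matrix (Fin m) (Fin m) ℂ) + β • jordanBlock m lam
      = (α + lam * β) • 1 + β • jordanBlock m 0 := by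
  rw [jordanBlock_eq_smul_one_add]
  module

lemma jordanBlock_zero_castSucc (n : ℕ) (k : Fin n) :
    jordanBlock (n + 1) 0 k.castSucc = Pi.single k.succ 1 := by
  ext j
  simp only [jordanBlock, eq_comm, of_apply, Fin.val_castSucc, Pi.single_apply, Fin.ext_iff,
    Fin.val_succ, right_eq_ite_iff, zero_ne_one, imp_false]
  omega

lemma jordanBlock_zero_last (n : ℕ) : jordanBlock (n + 1) 0 (Fin.last n) = 0 := by
  ext j
  simp only [jordanBlock, of_apply, Fin.val_last, Pi.zero_apply, ite_eq_left_iff,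
    ite_eq_right_iff, one_ne_zero, imp_false]
  omega

lemma jordanBlock_zero_mulVec (n : ℕ) (x : Fin (n + 1) → ℂ) :
    jordanBlock (n + 1) 0 *ᵥ x = Fin.snoc (α := fun _ ↦ ℂ) (Fin.tail x) 0 := by
  ext i
  induction i using Fin.lastCases with
  | last => simp [mulVec, jordanBlock_zero_last]
  | cast k => simp [mulVec, jordanBlock_zero_castSucc, Fin.tail]

lemma l2_opNorm_jordanBlock_zero_le (m : ℕ) : ‖jordanBlock m 0‖ ≤ 1 := by
  rcases m with _ | n
  · simp [Subsingleton.elim (jordanBlock 0 0) 0]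
  rw [← l2_opNorm_toEuclideanCLM]
  refine ContinuousLinearMap.opNorm_le_bound _ zero_le_one fun x ↦ ?_
  refine (sq_le_sq₀ (norm_nonneg _) (by positivity)).mp ?_
  simp only [EuclideanSpace.norm_sq_eq, ofLp_toEuclideanCLM, jordanBlock_zero_mulVec,
    Fin.sum_univ_castSucc, Fin.snoc_castSucc, Fin.snoc_last, Fin.tail, norm_zero, one_mul,
    Fin.sum_univ_succ (f := fun i ↦ ‖x i‖ ^ 2)]
  nlinarith [sq_nonneg ‖x 0‖]

/-- for `m ≥ 2` and `α, β, λ ∈ ℂ`,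
`(|α + λβ|² + |β|²)^{1/2} ≤ ‖α·I_m + β·J_m(λ)‖ ≤ |α + λβ| + |β|`. -/
theorem jordan_norm_estimate (m : ℕ) (hm : 2 ≤ m) (α β lam : ℂ) :
    Real.sqrt (‖α + lam * β‖ ^ 2 + ‖β‖ ^ 2)
        ≤ opNorm (α • (1 : Matrix (Fin m) (Fin m) ℂ) + β • jordanBlock m lam) ∧
      opNorm (α • (1 : Matrix (Fin m) (Fin m) ℂ) + β • jordanBlock m lam)
        ≤ ‖α + lam * β‖ + ‖β‖ := by
  obtain ⟨n, rfl⟩ := Nat.exists_eq_add_of_le' hm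
  rw [opNorm, l2_opNorm_toEuclideanCLM, smul_one_add_smul_jordanBlock]
  set A : Matrix (Fin (n + 2)) (Fin (n + 2)) ℂ :=
    (α + lam * β) • 1 + β • jordanBlock (n + 2) 0
  constructor
  · simpa [A, Finset.sum_pair, jordanBlock] using sqrt_sum_norm_sq_le_l2_opNorm A {1, 0} 1
  · calc ‖A‖ ≤ ‖α + lam * β‖ * ‖(1 : Matrix (Fin (n + 2)) (Fin (n + 2)) ℂ)‖
          + ‖β‖ * ‖jordanBlock (n + 2) 0‖ :=
        norm_add_le_of_le (norm_smul_le _ _) (norm_smul_le _ _)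
      _ ≤ ‖α + lam * β‖ * 1 + ‖β‖ * 1 := by
          gcongr
          · exact CStarRing.norm_one.le
          · exact l2_opNorm_jordanBlock_zero_le _
      _ = ‖α + lam * β‖ + ‖β‖ := by ring

end
end

section
/- Let α ∈ ℝ and β ∈ ℂ. Then the matrix α·I_k + β·J_k(0) + conj(β)·J_k(0)* is positive semidefinite for every positive integer k if and only if α ≥ 0 and |β| ≤ α/2. -/
/-!
Write `S = J_k(0)` and `β = ‖β‖ ω` with `|ω| = 1`. Sufficiency: since `S Sᴴ` is the diagonal
projection onto the first `k - 1` coordinates, `1 - S Sᴴ ⪰ 0`, and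
`α + βS + β̄Sᴴ = (α - 2‖β‖) + ‖β‖ ((1 + ωS)(1 + ωS)ᴴ + (1 - S Sᴴ))`.
Necessity: on the unit-modulus geometric vector `(z^i)` with `βz = -‖β‖` the quadratic form
equals `kα - 2(k - 1)‖β‖`; nonnegativity for `k = 1` gives `α ≥ 0` and letting `k → ∞` gives
`2‖β‖ ≤ α`.
-/

open Matrix
open scoped ComplexOrder

noncomputable section

theorem le_of_forall_nat_mul_le_succ_mul {K : Type*} [Field K] [LinearOrder K]
    [IsStrictOrderedRing K] [Archimedean K] {a b : K} (h : ∀ n : ℕ, n * a ≤ (n + 1) * b) :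
    a ≤ b := by
  by_contra! hba
  obtain ⟨n, hn⟩ := exists_nat_gt (b / (a - b))
  rw [div_lt_iff₀ (sub_pos.mpr hba)] at hn
  linarith [h n]

theorem star_dotProduct_conjTranspose_mulVec {n R : Type*} [Fintype n] [CommRing R] [StarRing R]
    (A : Matrix n n R) (v : n → R) : star v ⬝ᵥ (Aᴴ *ᵥ v) = star (star v ⬝ᵥ (A *ᵥ v)) := by
  rw [← star_dotProduct_star, star_mulVec, star_star, dotProduct_mulVec]

theorem posSemidef_smul_one_add_smul_add_smul_conjTranspose {n : Type*} [Fintype n]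
    [DecidableEq n] {S : Matrix n n ℂ} (hS : (1 - S * Sᴴ).PosSemidef) {α : ℝ} {β : ℂ}
    (hβ : ‖β‖ ≤ α / 2) :
    ((α : ℂ) • (1 : Matrix n n ℂ) + β • S + (starRingEnd ℂ) β • Sᴴ).PosSemidef := by
  obtain ⟨ω, hω, hβω⟩ := Complex.exists_norm_mul_eq_self β
  set b := ‖β‖
  have hωω : ω * (starRingEnd ℂ) ω = 1 := by rw [Complex.mul_conj', hω]; simp
  have hsq : (1 + ω • S) * (1 + ω • S)ᴴ
      = 1 + ω • S + (starRingEnd ℂ) ω • Sᴴ + (ω * (starRingEnd ℂ) ω) • (S * Sᴴ) := by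
    simp only [conjTranspose_add, conjTranspose_one, conjTranspose_smul, add_mul, mul_add,
      Matrix.one_mul, Matrix.mul_one, smul_mul_smul_comm, mul_smul, Complex.star_def]
    abel
  have hdecomp : (α : ℂ) • (1 : Matrix n n ℂ) + β • S + (starRingEnd ℂ) β • Sᴴ
      = (α - 2 * b) • (1 : Matrix n n ℂ) + b • ((1 + ω • S) * (1 + ω • S)ᴴ + (1 - S * Sᴴ)) := by
    rw [hsq, hωω, one_smul, ← hβω, map_mul, Complex.conj_ofReal]
    module
  rw [hdecomp]
  exact (PosSemidef.one.smul (by linarith [norm_nonneg β])).add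
    (((posSemidef_self_mul_conjTranspose _).add hS).smul (norm_nonneg β))

theorem jordanBlock_zero_apply {k : ℕ} (i j : Fin k) :
    jordanBlock k 0 i j = if (i : ℕ) + 1 = j then 1 else 0 := by
  simp only [jordanBlock, of_apply]
  split_ifs <;> first | rfl | omega

theorem jordanBlock_zero_mulVec_apply {k : ℕ} (v : Fin k → ℂ) (i : Fin k) :
    (jordanBlock k 0 *ᵥ v) i = if h : (i : ℕ) + 1 < k then v ⟨i + 1, h⟩ else 0 := by
  simp only [mulVec, dotProduct, jordanBlock_zero_apply, ite_mul, one_mul, zero_mul]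
  split_ifs with h
  · rw [Fintype.sum_eq_single ⟨i + 1, h⟩ fun j hj => if_neg fun e => hj (Fin.ext e.symm)]
    simp
  · exact Finset.sum_eq_zero fun j _ => if_neg fun (e : (i : ℕ) + 1 = j) => h (e ▸ j.isLt)

theorem jordanBlock_zero_mul_conjTranspose (k : ℕ) :
    jordanBlock k 0 * (jordanBlock k 0)ᴴ
      = diagonal fun i : Fin k => if (i : ℕ) + 1 < k then 1 else 0 := by
  ext i j
  change (jordanBlock k 0 *ᵥ fun l => (jordanBlock k 0)ᴴ l j) i = _
  rw [jordanBlock_zero_mulVec_apply, diagonal_apply]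
  simp only [conjTranspose_apply, jordanBlock_zero_apply, add_left_inj, Fin.val_inj]
  rcases eq_or_ne i j with rfl | hij
  · simp
  · simp [hij, hij.symm]

theorem posSemidef_one_sub_jordanBlock_zero_mul_conjTranspose (k : ℕ) :
    (1 - jordanBlock k 0 * (jordanBlock k 0)ᴴ).PosSemidef := by
  rw [jordanBlock_zero_mul_conjTranspose, ← diagonal_one, diagonal_sub]
  refine PosSemidef.diagonal fun i => ?_
  split_ifs <;> simp

theorem star_dotProduct_self_of_norm_eq_one {k : ℕ} {z : ℂ} (hz : ‖z‖ = 1) :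
    star (fun i : Fin k => z ^ (i : ℕ)) ⬝ᵥ (fun i => z ^ (i : ℕ)) = k := by
  have hzz : (starRingEnd ℂ) z * z = 1 := by rw [Complex.conj_mul', hz]; simp
  simp [dotProduct, ← mul_pow, hzz]

theorem star_dotProduct_jordanBlock_zero_mulVec_of_norm_eq_one {n : ℕ} {z : ℂ} (hz : ‖z‖ = 1) :
    star (fun i : Fin (n + 1) => z ^ (i : ℕ)) ⬝ᵥ (jordanBlock (n + 1) 0 *ᵥ fun i => z ^ (i : ℕ))
      = n * z := by
  have hzz : (starRingEnd ℂ) z * z = 1 := by rw [Complex.conj_mul', hz]; simp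
  simp [dotProduct, Fin.sum_univ_castSucc, jordanBlock_zero_mulVec_apply, pow_succ, ← mul_assoc,
    ← mul_pow, hzz]

theorem nat_mul_two_mul_norm_le_of_posSemidef_jordan {n : ℕ} {α : ℝ} {β : ℂ}
    (h : ((α : ℂ) • (1 : Matrix (Fin (n + 1)) (Fin (n + 1)) ℂ) + β • jordanBlock (n + 1) 0
      + (starRingEnd ℂ) β • (jordanBlock (n + 1) 0)ᴴ).PosSemidef) :
    n * (2 * ‖β‖) ≤ (n + 1) * α := by
  obtain ⟨c, hc, hβc⟩ := Complex.exists_norm_eq_mul_self β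
  have hc' : ‖-c‖ = 1 := by rwa [norm_neg]
  have hq := h.dotProduct_mulVec_nonneg fun i => (-c) ^ (i : ℕ)
  simp only [add_mulVec, smul_mulVec, one_mulVec, dotProduct_add, dotProduct_smul, smul_eq_mul,
    star_dotProduct_conjTranspose_mulVec, star_dotProduct_self_of_norm_eq_one hc',
    star_dotProduct_jordanBlock_zero_mulVec_of_norm_eq_one hc'] at hq
  have hβc' : (‖β‖ : ℂ) = (starRingEnd ℂ) c * (starRingEnd ℂ) β := by
    rw [← map_mul, ← hβc, Complex.conj_ofReal]
  have hform : (α : ℂ) * ↑(n + 1) + β * (n * -c) + (starRingEnd ℂ) β * star (n * -c)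
      = (((n + 1) * α - n * (2 * ‖β‖) : ℝ) : ℂ) := by
    simp only [Complex.star_def, map_mul, map_neg, map_natCast]
    push_cast
    linear_combination (n : ℂ) * hβc + (n : ℂ) * hβc'
  rw [hform, Complex.zero_le_real] at hq
  linarith

/-- for `α ∈ ℝ` and `β ∈ ℂ`, the matrix
`α·I_k + β·J_k(0) + conj(β)·J_k(0)*` is positive semidefinite for every positive integer `k`
if and only if `α ≥ 0` and `|β| ≤ α/2`. -/
theorem jordan_shift_posSemidef_iff (α : ℝ) (β : ℂ) :
    (∀ k : ℕ, 0 < k →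
        ((α : ℂ) • (1 : Matrix (Fin k) (Fin k) ℂ) + β • jordanBlock k 0
          + (starRingEnd ℂ) β • (jordanBlock k 0)ᴴ).PosSemidef) ↔
      0 ≤ α ∧ ‖β‖ ≤ α / 2 := by
  constructor
  · intro H
    have hform (n : ℕ) : n * (2 * ‖β‖) ≤ (n + 1) * α :=
      nat_mul_two_mul_norm_le_of_posSemidef_jordan (H (n + 1) n.succ_pos)
    have hα : 0 ≤ α := by simpa using hform 0
    have hβ := le_of_forall_nat_mul_le_succ_mul hform
    exact ⟨hα, by linarith⟩
  · rintro ⟨-, hβ⟩ k -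
    exact posSemidef_smul_one_add_smul_add_smul_conjTranspose
      (posSemidef_one_sub_jordanBlock_zero_mul_conjTranspose k) hβ

end
end

section
/- For every positive integer m, every λ ∈ ℂ, and every unit vector ξ ∈ ℂ^m, one has |⟨J_m(λ)ξ, ξ⟩ − λ| ≤ cos(π/(m+1)). In other words, the numerical range of J_m(λ) is contained in the closed disc of radius cos(π/(m+1)) centred at λ. -/
/-!
Since `J_m(λ) = λ • 1 + S` with `S` the upper shift, for a unit vector `ξ` we get
`⟨J_m(λ)ξ, ξ⟩ - λ = ∑ conj ξᵢ ξᵢ₊₁`, of modulus at most `∑ |ξᵢ| |ξᵢ₊₁|`.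
For real `x`, bound each `xᵢ xᵢ₊₁` by AM-GM with weights taken from the positive
eigenvector `wₖ = sin (k π / (m + 1))` of the path graph; its recurrence
`wₖ₋₁ + wₖ₊₁ = 2 cos (π / (m + 1)) wₖ` makes the coefficients of each `xₖ²` add up to
`cos (π / (m + 1))`.
-/

open Matrix

noncomputable section

open Finset Real

def upperShift (R : Type*) [Zero R] [One R] (m : ℕ) : Matrix (Fin m) (Fin m) R :=
  of fun i j => if (i : ℕ) + 1 = j then 1 else 0

lemma jordanBlock_eq_smul_one_add_upperShift (m : ℕ) (lam : ℂ) :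
    jordanBlock m lam = lam • 1 + upperShift ℂ m := by
  ext i j
  by_cases hij : i = j
  · simp [jordanBlock, upperShift, hij]
  · have : (i : ℕ) ≠ j := Fin.val_ne_of_ne hij
    simp [jordanBlock, upperShift, hij, one_apply_ne, this]

lemma star_dotProduct_self_eq_sum_norm_sq {𝕜 ι : Type*} [RCLike 𝕜] [Fintype ι] (ξ : ι → 𝕜) :
    star ξ ⬝ᵥ ξ = ((∑ i, ‖ξ i‖ ^ 2 : ℝ) : 𝕜) := by
  simp [dotProduct, RCLike.star_def, RCLike.conj_mul]

lemma upperShift_mulVec {R : Type*} [NonAssocSemiring R] {n : ℕ} (ξ : Fin (n + 1) → R)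
    (i : Fin (n + 1)) :
    (upperShift R (n + 1) *ᵥ ξ) i = ∑ k : Fin n, if i = k.castSucc then ξ k.succ else 0 := by
  rw [mulVec, dotProduct, Fin.sum_univ_succ]
  simp only [upperShift, of_apply, Fin.val_zero, Nat.add_one_ne_zero, if_false, zero_mul,
    zero_add, Fin.val_succ, Nat.add_right_cancel_iff, ite_mul, one_mul, Fin.ext_iff,
    Fin.val_castSucc]

lemma star_dotProduct_upperShift_mulVec {R : Type*} [NonAssocSemiring R] [Star R] {n : ℕ}
    (ξ : Fin (n + 1) → R) :
    star ξ ⬝ᵥ (upperShift R (n + 1) *ᵥ ξ) = ∑ i : Fin n, star (ξ i.castSucc) * ξ i.succ := by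
  simp only [dotProduct, upperShift_mulVec, mul_sum, mul_ite, mul_zero, Pi.star_apply]
  rw [sum_comm]
  simp only [sum_ite_eq', mem_univ, if_true]

lemma mul_le_weighted_sq_add_sq {x y : ℝ} (hx : 0 < x) (hy : 0 < y) (a b : ℝ) :
    a * b ≤ y / (2 * x) * a ^ 2 + x / (2 * y) * b ^ 2 := by
  have key : y / (2 * x) * a ^ 2 + x / (2 * y) * b ^ 2 - a * b
      = (y * a - x * b) ^ 2 / (2 * x * y) := by
    field_simp
    ring
  linarith [div_nonneg (sq_nonneg (y * a - x * b)) (by positivity : (0:ℝ) ≤ 2 * x * y)]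

/-- `w (k + 1)` is the weight of `x k`; `w 0` and `w (n + 2)` are boundary values. -/
theorem sum_mul_succ_le_of_superharmonic {n : ℕ} {c : ℝ} {w : ℕ → ℝ}
    (hw_pos : ∀ k ≤ n, 0 < w (k + 1)) (hw_zero : w 0 = 0) (hw_end : w (n + 2) = 0)
    (hw_rec : ∀ k ≤ n, w k + w (k + 2) ≤ 2 * c * w (k + 1)) (x : Fin (n + 1) → ℝ) :
    ∑ i : Fin n, x i.castSucc * x i.succ ≤ c * ∑ i, x i ^ 2 := by
  set u : ℕ → ℝ := fun k => w (k + 2) / (2 * w (k + 1))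
  set v : ℕ → ℝ := fun k => w k / (2 * w (k + 1))
  have hamgm (i : Fin n) :
      x i.castSucc * x i.succ ≤ u i * x i.castSucc ^ 2 + v (i + 1) * x i.succ ^ 2 :=
    mul_le_weighted_sq_add_sq (hw_pos i (by omega)) (hw_pos (i + 1) (by omega)) _ _
  have huv (i : Fin (n + 1)) : u i + v i ≤ c := by
    have hw := hw_pos i (by omega)
    rw [← add_div, div_le_iff₀ (by positivity)]
    linarith [hw_rec i (by omega)]
  calc ∑ i : Fin n, x i.castSucc * x i.succ
      ≤ ∑ i : Fin n, (u i * x i.castSucc ^ 2 + v (i + 1) * x i.succ ^ 2) :=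
        sum_le_sum fun i _ => hamgm i
    _ = ∑ i : Fin (n + 1), (u i + v i) * x i ^ 2 := by
      rw [sum_add_distrib]
      simp only [add_mul, sum_add_distrib]
      rw [Fin.sum_univ_castSucc (fun i => u i * x i ^ 2),
        Fin.sum_univ_succ (fun i => v i * x i ^ 2)]
      simp [u, v, hw_zero, hw_end]
    _ ≤ ∑ i, c * x i ^ 2 :=
        sum_le_sum fun i _ => mul_le_mul_of_nonneg_right (huv i) (sq_nonneg _)
    _ = c * ∑ i, x i ^ 2 := (mul_sum _ _ _).symm

theorem sum_mul_succ_le_cos_mul_sum_sq {n : ℕ} (x : Fin (n + 1) → ℝ) :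
    ∑ i : Fin n, x i.castSucc * x i.succ ≤ cos (π / (n + 2)) * ∑ i, x i ^ 2 := by
  set θ := π / (n + 2)
  have hθ : (n + 2) * θ = π := mul_div_cancel₀ π (by positivity)
  refine sum_mul_succ_le_of_superharmonic (w := fun k => sin (k * θ)) ?_ (by simp) ?_ ?_ x
  · intro k hk
    apply sin_pos_of_pos_of_lt_pi (by positivity)
    rw [← hθ]
    gcongr
    exact_mod_cast (by omega : k + 1 < n + 2)
  · push_cast
    rw [hθ, sin_pi]
  · intro k _
    have hmid : ((k : ℝ) * θ + (k + 2 : ℕ) * θ) / 2 = (k + 1 : ℕ) * θ := by push_cast; ring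
    have hhalf : ((k : ℝ) * θ - (k + 2 : ℕ) * θ) / 2 = -θ := by push_cast; ring
    rw [sin_add_sin, hmid, hhalf, cos_neg, mul_right_comm]

/-- for every positive integer `m`, every `λ ∈ ℂ` and every unit vector
`ξ ∈ ℂ^m`, one has `|⟨J_m(λ)ξ, ξ⟩ − λ| ≤ cos(π/(m+1))`. -/
theorem jordan_numericalRange_subset_disc (m : ℕ) (hm : 0 < m) (lam : ℂ)
    (ξ : Fin m → ℂ) (hξ : ∑ i, ‖ξ i‖ ^ 2 = 1) :
    ‖(star ξ) ⬝ᵥ ((jordanBlock m lam).mulVec ξ) - lam‖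
      ≤ Real.cos (Real.pi / (m + 1)) := by
  obtain ⟨n, rfl⟩ := Nat.exists_eq_add_one.mpr hm
  have hself : star ξ ⬝ᵥ ξ = 1 := by
    rw [star_dotProduct_self_eq_sum_norm_sq, hξ, RCLike.ofReal_one]
  rw [jordanBlock_eq_smul_one_add_upperShift, add_mulVec, smul_mulVec, one_mulVec, dotProduct_add,
    dotProduct_smul, hself, smul_eq_mul, mul_one, add_sub_cancel_left,
    star_dotProduct_upperShift_mulVec]
  calc ‖∑ i : Fin n, star (ξ i.castSucc) * ξ i.succ‖
      ≤ ∑ i : Fin n, ‖ξ i.castSucc‖ * ‖ξ i.succ‖ := by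
        simpa only [norm_mul, norm_star] using
          norm_sum_le univ fun i : Fin n => star (ξ i.castSucc) * ξ i.succ
    _ ≤ cos (π / (n + 2)) * ∑ i, ‖ξ i‖ ^ 2 := sum_mul_succ_le_cos_mul_sum_sq fun i => ‖ξ i‖
    _ = cos (π / ((n + 1 : ℕ) + 1)) := by rw [hξ, mul_one]; push_cast; ring_nf

end
end

section
/- For every positive integer m and every λ ∈ ℂ there exists a unit vector ξ ∈ ℂ^m such that ⟨J_m(λ)ξ, ξ⟩ = λ + i·cos(π/(m+1)). -/
open Matrix

noncomputable section

/-!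
The witness is `ξ_k ∝ i^k sin((k+1)θ)` with `θ = π/(m+1)`. The real vector `s_k = sin((k+1)θ)`
is the Dirichlet eigenvector of the path graph, `s_{k-1} + s_{k+1} = 2 cos θ · s_k` with
`s_{-1} = s_m = 0`, so `∑ s_k s_{k+1} = cos θ · ∑ s_k²`; the phases `i^k` turn the superdiagonal
contribution `∑ conj ξ_k ξ_{k+1}` into `i` times that sum.
-/

open Finset ComplexConjugate

theorem sum_mul_succ_eq_of_dirichlet_recurrence {K : Type*} [Field K] [NeZero (2 : K)]
    {t : ℕ → K} {c : K} {m : ℕ} (h0 : t 0 = 0) (hm : t (m + 1) = 0)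
    (hrec : ∀ k < m, t k + t (k + 2) = 2 * c * t (k + 1)) :
    ∑ k ∈ range m, t (k + 1) * t (k + 2) = c * ∑ k ∈ range m, t (k + 1) ^ 2 := by
  have hshift : ∑ k ∈ range m, t k * t (k + 1) = ∑ k ∈ range m, t (k + 1) * t (k + 2) := by
    have h := (sum_range_succ (fun k => t k * t (k + 1)) m).symm.trans
      (sum_range_succ' (fun k => t k * t (k + 1)) m)
    simpa [h0, hm] using h
  refine mul_left_cancel₀ (two_ne_zero (α := K)) ?_
  calc 2 * ∑ k ∈ range m, t (k + 1) * t (k + 2)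
      = ∑ k ∈ range m, t (k + 1) * (t k + t (k + 2)) := by
        rw [two_mul]
        nth_rewrite 1 [← hshift]
        rw [← sum_add_distrib]
        exact sum_congr rfl fun k _ => by ring
    _ = ∑ k ∈ range m, 2 * c * t (k + 1) ^ 2 :=
        sum_congr rfl fun k hk => by rw [hrec k (mem_range.1 hk)]; ring
    _ = 2 * (c * ∑ k ∈ range m, t (k + 1) ^ 2) := by rw [← mul_sum, mul_assoc]

theorem sin_nat_mul_add_sin_nat_add_two_mul (θ : ℝ) (k : ℕ) :
    Real.sin (k * θ) + Real.sin ((k + 2 : ℕ) * θ) = 2 * Real.cos θ * Real.sin ((k + 1 : ℕ) * θ) := by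
  have h₁ : (k : ℝ) * θ = (k + 1 : ℕ) * θ - θ := by push_cast; ring
  have h₂ : ((k + 2 : ℕ) : ℝ) * θ = (k + 1 : ℕ) * θ + θ := by push_cast; ring
  rw [h₁, h₂, Real.sin_sub, Real.sin_add]
  ring

-- `y m = 0` stands in for the missing superdiagonal entry of the last row.
theorem jordanBlock_mulVec_apply {m : ℕ} (lam : ℂ) {y : ℕ → ℂ} (hy : y m = 0) (i : Fin m) :
    (jordanBlock m lam *ᵥ fun j : Fin m => y j) i = lam * y i + y (i + 1) := by
  have hterm : ∀ j : ℕ, (if (i : ℕ) = j then lam else if (i : ℕ) + 1 = j then 1 else 0) * y j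
      = (if (i : ℕ) = j then lam * y j else 0) + (if (i : ℕ) + 1 = j then y j else 0) := by
    intro j
    split_ifs <;> first | omega | ring
  simp only [jordanBlock, mulVec, dotProduct, of_apply]
  rw [Fin.sum_univ_eq_sum_range (fun j => (if (i : ℕ) = j then lam else
    if (i : ℕ) + 1 = j then 1 else 0) * y j)]
  simp only [hterm, sum_add_distrib, sum_ite_eq, mem_range, i.isLt, if_true]
  split_ifs with h
  · rfl
  · rw [show (i : ℕ) + 1 = m by omega, hy]

theorem star_dotProduct_jordanBlock_mulVec {m : ℕ} (lam : ℂ) {y : ℕ → ℂ} (hy : y m = 0) :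
    star (fun j : Fin m => y j) ⬝ᵥ (jordanBlock m lam *ᵥ fun j : Fin m => y j)
      = ∑ k ∈ range m, conj (y k) * (lam * y k + y (k + 1)) := by
  simp only [dotProduct, Pi.star_apply, jordanBlock_mulVec_apply lam hy, RCLike.star_def]
  exact Fin.sum_univ_eq_sum_range (fun k => conj (y k) * (lam * y k + y (k + 1))) m

theorem conj_I_pow_mul_I_pow_succ_mul (k : ℕ) (a b : ℝ) :
    conj (Complex.I ^ k * a) * (Complex.I ^ (k + 1) * b) = Complex.I * (a * b : ℝ) := by
  have hk : conj (Complex.I ^ k) * Complex.I ^ k = 1 := by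
    rw [Complex.conj_mul', norm_pow, Complex.norm_I, one_pow, Complex.ofReal_one, one_pow]
  rw [map_mul, Complex.conj_ofReal, pow_succ, Complex.ofReal_mul]
  linear_combination (Complex.I * a * b) * hk

theorem star_dotProduct_jordanBlock_mulVec_I_pow_mul {m : ℕ} (lam : ℂ) {s : ℕ → ℝ}
    (hs : s m = 0) :
    star (fun j : Fin m => Complex.I ^ (j : ℕ) * s j) ⬝ᵥ
        (jordanBlock m lam *ᵥ fun j : Fin m => Complex.I ^ (j : ℕ) * s j)
      = lam * (∑ k ∈ range m, s k ^ 2 : ℝ) + Complex.I * (∑ k ∈ range m, s k * s (k + 1) : ℝ) := by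
  rw [star_dotProduct_jordanBlock_mulVec lam (y := fun k => Complex.I ^ k * s k) (by simp [hs]),
    Complex.ofReal_sum, Complex.ofReal_sum, mul_sum, mul_sum, ← sum_add_distrib]
  refine sum_congr rfl fun k _ => ?_
  rw [mul_add, mul_left_comm, Complex.conj_mul', conj_I_pow_mul_I_pow_succ_mul, norm_mul, norm_pow,
    Complex.norm_I, one_pow, one_mul, Complex.norm_real, Real.norm_eq_abs,
    ← Complex.ofReal_pow, sq_abs]

theorem sum_norm_I_pow_mul_sq (m : ℕ) (s : ℕ → ℝ) :
    ∑ j : Fin m, ‖Complex.I ^ (j : ℕ) * s j‖ ^ 2 = ∑ k ∈ range m, s k ^ 2 := by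
  simp [Fin.sum_univ_eq_sum_range (fun k => s k ^ 2), sq_abs]

theorem exists_unit_star_dotProduct_mulVec_eq {ι 𝕜 : Type*} [Fintype ι] [RCLike 𝕜]
    (A : Matrix ι ι 𝕜) {x : ι → 𝕜} (hx : x ≠ 0) {z : 𝕜}
    (h : star x ⬝ᵥ A *ᵥ x = z * (∑ i, ‖x i‖ ^ 2 : ℝ)) :
    ∃ ξ : ι → 𝕜, ∑ i, ‖ξ i‖ ^ 2 = 1 ∧ star ξ ⬝ᵥ A *ᵥ ξ = z := by
  set N := ∑ i, ‖x i‖ ^ 2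
  have hN : 0 < N := by
    obtain ⟨i, hi⟩ := Function.ne_iff.1 hx
    exact sum_pos' (fun j _ => by positivity) ⟨i, mem_univ i, by positivity⟩
  have hN' : (N : 𝕜) ≠ 0 := RCLike.ofReal_ne_zero.2 hN.ne'
  refine ⟨(√N)⁻¹ • x, ?_, ?_⟩
  · simp_rw [Pi.smul_apply, norm_smul, mul_pow, ← mul_sum]
    simp only [norm_inv, Real.norm_eq_abs, abs_of_nonneg (Real.sqrt_nonneg N), inv_pow,
      Real.sq_sqrt hN.le]
    exact inv_mul_cancel₀ hN.ne'
  · rw [star_smul, star_trivial, mulVec_smul, smul_dotProduct, dotProduct_smul, h, smul_smul,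
      ← mul_inv, Real.mul_self_sqrt hN.le, RCLike.real_smul_eq_coe_mul, RCLike.ofReal_inv,
      mul_comm z]
    exact inv_mul_cancel_left₀ hN' z

/-- for every positive integer `m` and every `λ ∈ ℂ` there is a unit vector
`ξ ∈ ℂ^m` with `⟨J_m(λ)ξ, ξ⟩ = λ + i·cos(π/(m+1))`. -/
theorem jordan_numericalRange_extremal_point (m : ℕ) (hm : 0 < m) (lam : ℂ) :
    ∃ ξ : Fin m → ℂ, ∑ i, ‖ξ i‖ ^ 2 = 1 ∧
      (star ξ) ⬝ᵥ ((jordanBlock m lam).mulVec ξ)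
        = lam + Complex.I * Real.cos (Real.pi / (m + 1)) := by
  set θ := Real.pi / (m + 1)
  set t : ℕ → ℝ := fun k => Real.sin (k * θ)
  have htop : t (m + 1) = 0 := by
    have hπ : ((m + 1 : ℕ) : ℝ) * θ = Real.pi := by push_cast; exact mul_div_cancel₀ _ (by positivity)
    simp only [t, hπ, Real.sin_pi]
  have hsum : ∑ k ∈ range m, t (k + 1) * t (k + 2) = Real.cos θ * ∑ k ∈ range m, t (k + 1) ^ 2 :=
    sum_mul_succ_eq_of_dirichlet_recurrence (by simp [t]) htop
      fun k _ => sin_nat_mul_add_sin_nat_add_two_mul θ k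
  have hx : (fun j : Fin m => Complex.I ^ (j : ℕ) * t (j + 1)) ≠ 0 := by
    have ht₁ : 0 < t 1 := by
      refine Real.sin_pos_of_pos_of_lt_pi (by simpa [θ] using by positivity) ?_
      simpa [θ] using div_lt_self Real.pi_pos (by norm_cast; omega)
    intro h
    simpa [ht₁.ne'] using congrFun h ⟨0, hm⟩
  refine exists_unit_star_dotProduct_mulVec_eq _ hx ?_
  rw [star_dotProduct_jordanBlock_mulVec_I_pow_mul lam (s := fun k => t (k + 1)) htop,
    sum_norm_I_pow_mul_sq m (fun k => t (k + 1)), hsum,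
    RCLike.ofReal_eq_complex_ofReal, Complex.ofReal_mul]
  ring

end
end

section
/- Let m, M_1, …, M_r be positive integers with M_t ≥ m for every t, let μ_1, …, μ_r ∈ ℂ, and let a_1, …, a_r ≥ 0 with Σ_t a_t = 1; set μ = Σ_t a_t μ_t. Then there exists a unital completely positive map ψ : ⊕_{t=1}^r M_{M_t}(ℂ) → M_m(ℂ) such that ψ(⊕_{t=1}^r J_{M_t}(μ_t)) = J_m(μ). In particular J_m(μ) lies in the matricial range W_m(⊕_{t=1}^r J_{M_t}(μ_t)). -/
open scoped ComplexOrder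

noncomputable section

/-- The direct sum `⊕_j M_{k_j}(ℂ)`. -/
abbrev PiMat (n : ℕ) (k : Fin n → ℕ) := ∀ j : Fin n, Matrix (Fin (k j)) (Fin (k j)) ℂ

/-- A `p×p` matrix with entries in the direct sum `⊕_j M_{k_j}(ℂ)` is positive if for each `j`
the associated complex block matrix is positive semidefinite. -/
def PiMatPos {n : ℕ} {k : Fin n → ℕ} {p : ℕ} (X : Matrix (Fin p) (Fin p) (PiMat n k)) : Prop :=
  ∀ j : Fin n,
    (Matrix.of fun (a b : Fin p × Fin (k j)) => X a.1 b.1 j a.2 b.2).PosSemidef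

/-- Positivity for a `p×p` matrix with entries in `M_m(ℂ)`. -/
def MatPos {m : ℕ} {p : ℕ} (X : Matrix (Fin p) (Fin p) (Matrix (Fin m) (Fin m) ℂ)) : Prop :=
  (Matrix.of fun (a b : Fin p × Fin m) => X a.1 b.1 a.2 b.2).PosSemidef

/-- Unital completely positive map defined on all of `⊕_j M_{k_j}(ℂ)`, valued in `M_m(ℂ)`. -/
def IsUcpAlg {n : ℕ} {k : Fin n → ℕ} {m : ℕ}
    (φ : PiMat n k →ₗ[ℂ] Matrix (Fin m) (Fin m) ℂ) : Prop :=
  φ 1 = 1 ∧ ∀ (p : ℕ) (X : Matrix (Fin p) (Fin p) (PiMat n k)),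
    PiMatPos X → MatPos (Matrix.of fun r s => φ (X r s))

/-- The operator system `S_T = span{1, T, T*}`. -/
def opSys {n : ℕ} {k : Fin n → ℕ} (T : PiMat n k) : Submodule ℂ (PiMat n k) :=
  Submodule.span ℂ {1, T, star T}

lemma one_mem_opSys {n : ℕ} {k : Fin n → ℕ} (T : PiMat n k) : (1 : PiMat n k) ∈ opSys T :=
  Submodule.subset_span (Set.mem_insert _ _)

lemma self_mem_opSys {n : ℕ} {k : Fin n → ℕ} (T : PiMat n k) : T ∈ opSys T :=
  Submodule.subset_span (Set.mem_insert_of_mem _ (Set.mem_insert _ _))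

lemma star_mem_opSys {n : ℕ} {k : Fin n → ℕ} (T : PiMat n k) : star T ∈ opSys T :=
  Submodule.subset_span (Set.mem_insert_of_mem _ (Set.mem_insert_of_mem _ rfl))

/-- Unital completely positive map defined on the operator system `S_T`, valued in `M_m(ℂ)`. -/
def IsUcpSub {n : ℕ} {k : Fin n → ℕ} {m : ℕ} (T : PiMat n k)
    (φ : opSys T →ₗ[ℂ] Matrix (Fin m) (Fin m) ℂ) : Prop :=
  φ ⟨1, one_mem_opSys T⟩ = 1 ∧ ∀ (p : ℕ) (X : Matrix (Fin p) (Fin p) (opSys T)),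
    PiMatPos (Matrix.of fun r s => (X r s : PiMat n k)) →
      MatPos (Matrix.of fun r s => φ (X r s))

/-- The matricial range `W_m(T)`. -/
def matricialRange {n : ℕ} {k : Fin n → ℕ} (T : PiMat n k) (m : ℕ) :
    Set (Matrix (Fin m) (Fin m) ℂ) :=
  {A | ∃ φ : opSys T →ₗ[ℂ] Matrix (Fin m) (Fin m) ℂ,
        IsUcpSub T φ ∧ φ ⟨T, self_mem_opSys T⟩ = A}

/-- The compression `π_ℓ` onto the `ℓ`-th summand is a boundary representation for `S_T`
if it is the unique ucp map `⊕_j M_{k_j}(ℂ) → M_{k_ℓ}(ℂ)` extending the restriction of `π_ℓ`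
to `S_T`. -/
def IsBoundaryRep {n : ℕ} {k : Fin n → ℕ} (T : PiMat n k) (ℓ : Fin n) : Prop :=
  ∀ φ : PiMat n k →ₗ[ℂ] Matrix (Fin (k ℓ)) (Fin (k ℓ)) ℂ,
    IsUcpAlg φ → (∀ x ∈ opSys T, φ x = x ℓ) → φ = LinearMap.proj ℓ

end

/-!
Compressing the `t`-th summand to its top-left `m × m` corner is ucp and sends `J_{M_t}(μ_t)` to
`J_m(μ_t)`. The convex combination `ψ = Σ_t a_t · (corner of the t-th summand)` is then ucp, and
since `J_m(λ) = λ I + N` is affine in `λ`, it sends `⊕_t J_{M_t}(μ_t)` to `Σ_t a_t J_m(μ_t) = J_m(μ)`.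
Restricting `ψ` to the operator system gives the matricial-range membership.
-/

namespace Matrix

variable {R ι κ : Type*} [Semiring R]

def submatrixLinearMap (e : κ → ι) : Matrix ι ι R →ₗ[R] Matrix κ κ R where
  toFun A := A.submatrix e e
  map_add' _ _ := rfl
  map_smul' _ _ := rfl

@[simp]
lemma submatrixLinearMap_apply (e : κ → ι) (A : Matrix ι ι R) :
    submatrixLinearMap e A = A.submatrix e e :=
  rfl

end Matrix

lemma jordanBlock_submatrix_castLE {m M : ℕ} (h : m ≤ M) (lam : ℂ) :
    (jordanBlock M lam).submatrix (Fin.castLE h) (Fin.castLE h) = jordanBlock m lam := by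
  ext i j
  simp [jordanBlock]

lemma sum_smul_jordanBlock {ι : Type*} (s : Finset ι) (m : ℕ) (w μ : ι → ℂ)
    (hw : ∑ i ∈ s, w i = 1) :
    ∑ i ∈ s, w i • jordanBlock m (μ i) = jordanBlock m (∑ i ∈ s, w i * μ i) := by
  ext p q
  simp only [Matrix.sum_apply, Matrix.smul_apply, jordanBlock, Matrix.of_apply, smul_eq_mul]
  split_ifs <;> simp [hw]

section Ucp

variable {n : ℕ} {k : Fin n → ℕ} {m : ℕ}

lemma isUcpAlg_submatrixLinearMap_comp_proj (t : Fin n) {e : Fin m → Fin (k t)}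
    (he : Function.Injective e) :
    IsUcpAlg ((Matrix.submatrixLinearMap e).comp (LinearMap.proj t : PiMat n k →ₗ[ℂ] _)) :=
  ⟨Matrix.submatrix_one e he, fun _ _ hX => (hX t).submatrix (Prod.map id e)⟩

lemma IsUcpAlg.sum_smul {ι : Type*} (s : Finset ι)
    {φ : ι → PiMat n k →ₗ[ℂ] Matrix (Fin m) (Fin m) ℂ} (hφ : ∀ i ∈ s, IsUcpAlg (φ i))
    {a : ι → ℝ} (ha : ∀ i ∈ s, 0 ≤ a i) (hsum : ∑ i ∈ s, a i = 1) :
    IsUcpAlg (∑ i ∈ s, (a i : ℂ) • φ i) := by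
  refine ⟨?_, fun p X hX => ?_⟩
  · calc (∑ i ∈ s, (a i : ℂ) • φ i) 1 = ∑ i ∈ s, (a i : ℂ) • (1 : Matrix (Fin m) (Fin m) ℂ) :=
          by simp only [LinearMap.sum_apply, LinearMap.smul_apply]
             exact Finset.sum_congr rfl fun i hi => by rw [(hφ i hi).1]
      _ = 1 := by rw [← Finset.sum_smul, ← Complex.ofReal_sum, hsum, Complex.ofReal_one, one_smul]
  · have hblock : (Matrix.of fun (c d : Fin p × Fin m) =>
          (∑ i ∈ s, (a i : ℂ) • φ i) (X c.1 d.1) c.2 d.2) =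
        ∑ i ∈ s, (a i : ℂ) • Matrix.of fun (c d : Fin p × Fin m) => φ i (X c.1 d.1) c.2 d.2 := by
      ext c d
      simp [LinearMap.sum_apply, Matrix.sum_apply]
    rw [MatPos]
    simp only [Matrix.of_apply, hblock]
    exact Matrix.posSemidef_sum s fun i hi =>
      ((hφ i hi).2 p X hX).smul (Complex.zero_le_real.mpr (ha i hi))

lemma IsUcpAlg.mem_matricialRange {φ : PiMat n k →ₗ[ℂ] Matrix (Fin m) (Fin m) ℂ}
    (hφ : IsUcpAlg φ) (T : PiMat n k) : φ T ∈ matricialRange T m :=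
  ⟨φ.comp (opSys T).subtype, ⟨hφ.1, fun p _ hX => hφ.2 p _ hX⟩, rfl⟩

end Ucp

theorem jordan_convexCombination_in_matricialRange_general (m r : ℕ)
    (M : Fin r → ℕ) (hM : ∀ t, m ≤ M t) (μ : Fin r → ℂ)
    (a : Fin r → ℝ) (ha : ∀ t, 0 ≤ a t) (hsum : ∑ t, a t = 1) :
    (∃ ψ : PiMat r M →ₗ[ℂ] Matrix (Fin m) (Fin m) ℂ,
        IsUcpAlg ψ ∧
          ψ (fun t => jordanBlock (M t) (μ t)) = jordanBlock m (∑ t, (a t : ℂ) * μ t)) ∧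
      jordanBlock m (∑ t, (a t : ℂ) * μ t)
        ∈ matricialRange (fun t => jordanBlock (M t) (μ t)) m := by
  let ψ : PiMat r M →ₗ[ℂ] Matrix (Fin m) (Fin m) ℂ :=
    ∑ t, (a t : ℂ) • (Matrix.submatrixLinearMap (Fin.castLE (hM t))).comp (LinearMap.proj t)
  have hψ : IsUcpAlg ψ :=
    IsUcpAlg.sum_smul _
      (fun t _ => isUcpAlg_submatrixLinearMap_comp_proj t (Fin.castLE_injective (hM t)))
      (fun t _ => ha t) hsum
  have hψJ : ψ (fun t => jordanBlock (M t) (μ t)) = jordanBlock m (∑ t, (a t : ℂ) * μ t) := by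
    simp only [ψ, LinearMap.sum_apply, LinearMap.smul_apply, LinearMap.comp_apply,
      LinearMap.proj_apply, Matrix.submatrixLinearMap_apply, jordanBlock_submatrix_castLE]
    exact sum_smul_jordanBlock _ m _ μ (by exact_mod_cast hsum)
  exact ⟨⟨ψ, hψ, hψJ⟩, hψJ ▸ hψ.mem_matricialRange _⟩

/-- given sizes `M_t ≥ m`, points `μ_t ∈ ℂ` and convex coefficients `a_t`,
with `μ = Σ_t a_t μ_t`, there is a ucp map `ψ : ⊕_t M_{M_t}(ℂ) → M_m(ℂ)` carrying
`⊕_t J_{M_t}(μ_t)` to `J_m(μ)`; in particular `J_m(μ) ∈ W_m(⊕_t J_{M_t}(μ_t))`. -/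
theorem jordan_convexCombination_in_matricialRange (m r : ℕ) (hm : 0 < m) (hr : 0 < r)
    (M : Fin r → ℕ) (hM : ∀ t, m ≤ M t) (μ : Fin r → ℂ)
    (a : Fin r → ℝ) (ha : ∀ t, 0 ≤ a t) (hsum : ∑ t, a t = 1) :
    (∃ ψ : PiMat r M →ₗ[ℂ] Matrix (Fin m) (Fin m) ℂ,
        IsUcpAlg ψ ∧
          ψ (fun t => jordanBlock (M t) (μ t)) = jordanBlock m (∑ t, (a t : ℂ) * μ t)) ∧
      jordanBlock m (∑ t, (a t : ℂ) * μ t)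
        ∈ matricialRange (fun t => jordanBlock (M t) (μ t)) m :=
  jordan_convexCombination_in_matricialRange_general m r M hM μ a ha hsum
end

section
/- Let N ≥ 1 and let m_1, …, m_N be positive integers with m_1 ≥ 2 and m_k ≤ m_1 for all k. Let J = ⊕_{k=1}^N J_{m_k}(0) ∈ B = ⊕_{k=1}^N M_{m_k}(ℂ). Then the unital linear map q : span{1, J, J*} → span{I_{m_1}, J_{m_1}(0), J_{m_1}(0)*} ⊆ M_{m_1}(ℂ) determined by q(α·1 + β·J + γ·J*) = α·I_{m_1} + β·J_{m_1}(0) + γ·J_{m_1}(0)* is a well-defined complete order isomorphism, i.e., q is a bijection and both q and q^{-1} are ucp. -/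
open scoped ComplexOrder

noncomputable section

/-- The operator system `span{1, A, A*}` inside a single matrix algebra. -/
def matOpSys {m : ℕ} (A : Matrix (Fin m) (Fin m) ℂ) :
    Submodule ℂ (Matrix (Fin m) (Fin m) ℂ) :=
  Submodule.span ℂ {1, A, star A}

lemma one_mem_matOpSys {m : ℕ} (A : Matrix (Fin m) (Fin m) ℂ) : (1 : _) ∈ matOpSys A :=
  Submodule.subset_span (Set.mem_insert _ _)

lemma self_mem_matOpSys {m : ℕ} (A : Matrix (Fin m) (Fin m) ℂ) : A ∈ matOpSys A :=
  Submodule.subset_span (Set.mem_insert_of_mem _ (Set.mem_insert _ _))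

lemma star_mem_matOpSys {m : ℕ} (A : Matrix (Fin m) (Fin m) ℂ) : star A ∈ matOpSys A :=
  Submodule.subset_span (Set.mem_insert_of_mem _ (Set.mem_insert_of_mem _ rfl))

/-- The nilpotent Jordan operator `J = ⊕_{k} J_{m_k}(0)`. -/
def jordanSum (N : ℕ) (m : Fin (N + 1) → ℕ) : PiMat (N + 1) m := fun k => jordanBlock (m k) 0

/-!
The map `q` is the restriction of the projection onto the first summand, and its inverse is the
compression of `M_{m_1}(ℂ)` to the top-left `m_k × m_k` corners. Both are unital, star-preserving
and completely positive (a corner of a positive block matrix is positive), and the compression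
sends `J_{m_1}(0)` to `J`. Hence it maps `span{I, J_{m_1}(0), J_{m_1}(0)*}` onto `span{1, J, J*}`,
and since the first corner of a compression is the matrix itself, the two maps are mutually
inverse on these operator systems.
-/

theorem Submodule.map_span_one_self_star {R E F : Type*} [Semiring R] [AddCommMonoid E]
    [Module R E] [One E] [Star E] [AddCommMonoid F] [Module R F] [One F] [Star F]
    (f : E →ₗ[R] F) (h_one : f 1 = 1) {a : E} (h_star : f (star a) = star (f a)) :
    (span R {1, a, star a}).map f = span R {1, f a, star (f a)} := by
  rw [Submodule.map_span, Set.image_insert_eq, Set.image_insert_eq, Set.image_singleton,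
    h_one, h_star]

section CornerCompression

variable {n : ℕ} {k : Fin n → ℕ} {M : ℕ}

def cornerCompr (hle : ∀ j, k j ≤ M) : Matrix (Fin M) (Fin M) ℂ →ₗ[ℂ] PiMat n k where
  toFun A j := A.submatrix (Fin.castLE (hle j)) (Fin.castLE (hle j))
  map_add' _ _ := rfl
  map_smul' _ _ := rfl

lemma cornerCompr_apply (hle : ∀ j, k j ≤ M) (A : Matrix (Fin M) (Fin M) ℂ) (j : Fin n) :
    cornerCompr hle A j = A.submatrix (Fin.castLE (hle j)) (Fin.castLE (hle j)) := rfl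

lemma cornerCompr_one (hle : ∀ j, k j ≤ M) : cornerCompr hle 1 = 1 := by
  funext j
  exact Matrix.submatrix_one_embedding (Fin.castLEEmb (hle j))

lemma cornerCompr_star (hle : ∀ j, k j ≤ M) (A : Matrix (Fin M) (Fin M) ℂ) :
    cornerCompr hle (star A) = star (cornerCompr hle A) := rfl

lemma cornerCompr_jordanBlock (hle : ∀ j, k j ≤ M) (lam : ℂ) (j : Fin n) :
    cornerCompr hle (jordanBlock M lam) j = jordanBlock (k j) lam := by
  ext
  simp [cornerCompr_apply, jordanBlock]

lemma cornerCompr_apply_self {i : Fin n} (hle : ∀ j, k j ≤ k i)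
    (A : Matrix (Fin (k i)) (Fin (k i)) ℂ) : cornerCompr hle A i = A := by
  simp [cornerCompr_apply]

lemma MatPos.cornerCompr {p : ℕ} {X : Matrix (Fin p) (Fin p) (Matrix (Fin M) (Fin M) ℂ)}
    (hX : MatPos X) (hle : ∀ j, k j ≤ M) :
    PiMatPos (Matrix.of fun r s => cornerCompr hle (X r s)) :=
  fun j => hX.submatrix (Prod.map id (Fin.castLE (hle j)))

end CornerCompression

theorem jordanSum_completeOrderIso_general (N : ℕ) (m : Fin (N + 1) → ℕ)
    (hle : ∀ k, m k ≤ m 0) :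
    ∃ q : opSys (jordanSum N m) →ₗ[ℂ] Matrix (Fin (m 0)) (Fin (m 0)) ℂ,
      q ⟨1, one_mem_opSys _⟩ = 1 ∧
      q ⟨jordanSum N m, self_mem_opSys _⟩ = jordanBlock (m 0) 0 ∧
      q ⟨star (jordanSum N m), star_mem_opSys _⟩ = star (jordanBlock (m 0) 0) ∧
      (∀ (p : ℕ) (X : Matrix (Fin p) (Fin p) (opSys (jordanSum N m))),
        PiMatPos (Matrix.of fun r s => (X r s : PiMat (N + 1) m)) →
          MatPos (Matrix.of fun r s => q (X r s))) ∧
      ∃ q' : matOpSys (jordanBlock (m 0) 0) →ₗ[ℂ] PiMat (N + 1) m,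
        q' ⟨1, one_mem_matOpSys _⟩ = 1 ∧
        (∀ (p : ℕ) (X : Matrix (Fin p) (Fin p) (matOpSys (jordanBlock (m 0) 0))),
          MatPos (Matrix.of fun r s => (X r s : Matrix (Fin (m 0)) (Fin (m 0)) ℂ)) →
            PiMatPos (Matrix.of fun r s => q' (X r s))) ∧
        (∀ x : opSys (jordanSum N m),
          ∃ h : q x ∈ matOpSys (jordanBlock (m 0) 0), q' ⟨q x, h⟩ = x) ∧
        (∀ y : matOpSys (jordanBlock (m 0) 0),
          ∃ h : q' y ∈ opSys (jordanSum N m), q ⟨q' y, h⟩ = y) := by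
  have hJ : cornerCompr hle (jordanBlock (m 0) 0) = jordanSum N m :=
    funext (cornerCompr_jordanBlock hle 0)
  have h_map :
      (matOpSys (jordanBlock (m 0) 0)).map (cornerCompr hle) = opSys (jordanSum N m) := by
    rw [matOpSys, Submodule.map_span_one_self_star _ (cornerCompr_one hle)
      (cornerCompr_star hle _), hJ, opSys]
  refine ⟨(LinearMap.proj 0).comp (opSys _).subtype, rfl, rfl, rfl, fun _ _ hX => hX 0,
    (cornerCompr hle).comp (matOpSys _).subtype, cornerCompr_one hle,
    fun _ _ hX => hX.cornerCompr hle, ?_, ?_⟩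
  · rintro ⟨x, hx⟩
    rw [← h_map] at hx
    obtain ⟨A, hA, rfl⟩ := hx
    have hA0 := cornerCompr_apply_self hle A
    exact ⟨show cornerCompr hle A 0 ∈ _ from hA0 ▸ hA, congrArg (cornerCompr hle) hA0⟩
  · rintro ⟨A, hA⟩
    exact ⟨h_map ▸ Submodule.mem_map_of_mem hA, cornerCompr_apply_self hle A⟩

/-- if `m_1 ≥ 2` and `m_k ≤ m_1` for all `k`, the unital linear map `q` on
`span{1, J, J*}` (for `J = ⊕_k J_{m_k}(0)`) determined by
`q(α·1 + β·J + γ·J*) = α·I_{m_1} + β·J_{m_1}(0) + γ·J_{m_1}(0)*` is a well-defined complete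
order isomorphism onto `span{1, J_{m_1}(0), J_{m_1}(0)*} ⊆ M_{m_1}(ℂ)`: it is completely
positive, unital, bijective onto that operator system, and has a ucp inverse. -/
theorem jordanSum_completeOrderIso (N : ℕ) (m : Fin (N + 1) → ℕ)
    (hm : ∀ k, 0 < m k) (h0 : 2 ≤ m 0) (hle : ∀ k, m k ≤ m 0) :
    ∃ q : opSys (jordanSum N m) →ₗ[ℂ] Matrix (Fin (m 0)) (Fin (m 0)) ℂ,
      q ⟨1, one_mem_opSys _⟩ = 1 ∧
      q ⟨jordanSum N m, self_mem_opSys _⟩ = jordanBlock (m 0) 0 ∧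
      q ⟨star (jordanSum N m), star_mem_opSys _⟩ = star (jordanBlock (m 0) 0) ∧
      (∀ (p : ℕ) (X : Matrix (Fin p) (Fin p) (opSys (jordanSum N m))),
        PiMatPos (Matrix.of fun r s => (X r s : PiMat (N + 1) m)) →
          MatPos (Matrix.of fun r s => q (X r s))) ∧
      ∃ q' : matOpSys (jordanBlock (m 0) 0) →ₗ[ℂ] PiMat (N + 1) m,
        q' ⟨1, one_mem_matOpSys _⟩ = 1 ∧
        (∀ (p : ℕ) (X : Matrix (Fin p) (Fin p) (matOpSys (jordanBlock (m 0) 0))),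
          MatPos (Matrix.of fun r s => (X r s : Matrix (Fin (m 0)) (Fin (m 0)) ℂ)) →
            PiMatPos (Matrix.of fun r s => q' (X r s))) ∧
        (∀ x : opSys (jordanSum N m),
          ∃ h : q x ∈ matOpSys (jordanBlock (m 0) 0), q' ⟨q x, h⟩ = x) ∧
        (∀ y : matOpSys (jordanBlock (m 0) 0),
          ∃ h : q' y ∈ opSys (jordanSum N m), q ⟨q' y, h⟩ = y) :=
  jordanSum_completeOrderIso_general N m hle

end
end
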